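/- (Proposition 1.) Let r ≤ n ≤ N, let R ∈ (ℤ/2ℤ)^{n×r} have rank r, let t ∈ (ℤ/2ℤ)^n, c ∈ (ℤ/2ℤ)^n, let Q ∈ (ℤ/2ℤ)^{n×n} be symmetric, and define f(z) = Rz + t and ψ₀ = 2^{−r/2} Σ_{z ∈ (ℤ/2ℤ)^r} i^{2 c^⊤ f(z) + f(z)^⊤ Q f(z)} e_{f(z)} ∈ ℂ^{2^n} (exponents of i computed in ℤ from the {0,1} representatives). Let A ∈ (ℤ/2ℤ)^{N×n}. Then for every b ∈ (ℤ/2ℤ)^N, the sum Σ_{x : A u_x = b} |⟨ψ₀, e_{u_x}⟩|² (over x ∈ {0,…,2^n−1} with A u_x = b over ℤ/2ℤ) equals 2^{−rank(AR)} if b ∈ {A f(z) : z ∈ (ℤ/2ℤ)^r}, and equals 0 otherwise, where rank(AR) is the 𝔽₂-rank of AR. -/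

import Mathlib

/-!
Since `R` has full column rank, `f` is injective, so `ψ₀` has amplitude of modulus `2^{-r/2}`
exactly on the `2^r` points of `range f` and vanishes elsewhere. The sum over `A u = b` therefore
counts the `z` with `(A R) z + A t = b`: this is a coset of `ker (A R)`, of size
`2^{r - rank(AR)}`, when nonempty.
-/

open Matrix Finset Module
open scoped InnerProductSpace Classical

namespace Matrix

variable {K m n : Type*} [Field K] [Fintype n]

theorem finrank_ker_mulVecLin (M : Matrix m n K) :
    finrank K (LinearMap.ker M.mulVecLin) = Fintype.card n - M.rank := by
  have := LinearMap.finrank_range_add_finrank_ker M.mulVecLin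
  rw [finrank_fintype_fun_eq_card] at this
  unfold Matrix.rank
  omega

theorem mulVec_injective_of_rank_eq_card {M : Matrix m n K} (hM : M.rank = Fintype.card n) :
    Function.Injective M.mulVec := by
  have hker : LinearMap.ker M.mulVecLin = ⊥ := by
    rw [← Submodule.finrank_eq_zero, finrank_ker_mulVecLin, hM, Nat.sub_self]
  exact LinearMap.ker_eq_bot.mp hker

variable [Fintype K] [DecidableEq n] [DecidableEq (m → K)]

theorem card_filter_mulVec_eq_zero (M : Matrix m n K) :
    #{z | M *ᵥ z = 0} = Fintype.card K ^ (Fintype.card n - M.rank) := by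
  rw [← finrank_ker_mulVecLin, ← card_eq_pow_finrank, ← Fintype.card_subtype]
  exact Fintype.card_congr (Equiv.refl _)

theorem card_filter_mulVec_eq_of_mem_range (M : Matrix m n K) {b : m → K}
    (hb : b ∈ Set.range M.mulVec) :
    #{z | M *ᵥ z = b} = Fintype.card K ^ (Fintype.card n - M.rank) := by
  rw [← card_filter_mulVec_eq_zero M]
  exact AddMonoidHom.card_fiber_eq_of_mem_range M.mulVecLin hb ⟨0, M.mulVec_zero⟩

theorem card_filter_mulVec_add_eq_of_mem_range (M : Matrix m n K) {v b : m → K}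
    (hb : b ∈ Set.range (M *ᵥ · + v)) :
    #{z | M *ᵥ z + v = b} = Fintype.card K ^ (Fintype.card n - M.rank) := by
  obtain ⟨z₀, rfl⟩ := hb
  simp_rw [add_left_inj]
  exact card_filter_mulVec_eq_of_mem_range M ⟨z₀, rfl⟩

end Matrix

namespace EuclideanSpace

variable {𝕜 ι α : Type*} [RCLike 𝕜] [Fintype ι] [DecidableEq α] {f : ι → α}

theorem sum_smul_single_apply_of_injective (hf : f.Injective) (a : ι → 𝕜) (i : ι) :
    (∑ j, a j • EuclideanSpace.single (f j) (1 : 𝕜)) (f i) = a i := by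
  rw [WithLp.ofLp_sum, Finset.sum_apply, Finset.sum_eq_single i]
  · simp
  · intro j _ hji
    simp [hf.ne hji.symm]
  · simp

theorem sum_smul_single_apply_of_notMem_range (a : ι → 𝕜) {u : α} (hu : u ∉ Set.range f) :
    (∑ j, a j • EuclideanSpace.single (f j) (1 : 𝕜)) u = 0 := by
  rw [WithLp.ofLp_sum, Finset.sum_apply]
  refine Finset.sum_eq_zero fun j _ => ?_
  have hne : u ≠ f j := fun h => hu ⟨j, h.symm⟩
  simp [hne]

end EuclideanSpace

theorem stmt5_general (N n r : ℕ)
    (R : Matrix (Fin n) (Fin r) (ZMod 2)) (hR : R.rank = r)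
    (t c : Fin n → ZMod 2) (Q : Matrix (Fin n) (Fin n) (ZMod 2))
    (f : (Fin r → ZMod 2) → (Fin n → ZMod 2)) (hf : ∀ z, f z = R.mulVec z + t)
    (ψ₀ : EuclideanSpace ℂ (Fin n → ZMod 2))
    (hψ₀ : ψ₀ = ((Real.sqrt (2 ^ r) : ℂ))⁻¹ •
      ∑ z : Fin r → ZMod 2,
        (Complex.I ^ (2 * ∑ m, (c m).val * (f z m).val +
            ∑ m, ∑ m', (f z m).val * ((Q m m').val * (f z m').val))) •
          EuclideanSpace.single (f z) (1 : ℂ))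
    (A : Matrix (Fin N) (Fin n) (ZMod 2)) :
    ∀ b : Fin N → ZMod 2,
      ∑ u ∈ Finset.univ.filter (fun u : Fin n → ZMod 2 => A.mulVec u = b),
        ‖⟪ψ₀, EuclideanSpace.single u 1⟫_ℂ‖ ^ 2 =
      if b ∈ Set.range (fun z : Fin r → ZMod 2 => A.mulVec (f z)) then
        ((2 : ℝ) ^ (A * R).rank)⁻¹
      else 0 := by
  intro b
  have hf_inj : f.Injective := by
    intro x y hxy
    rw [hf, hf, add_left_inj] at hxy
    exact mulVec_injective_of_rank_eq_card (hR.trans (Fintype.card_fin r).symm) hxy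
  have h_on : ∀ z, ‖⟪ψ₀, EuclideanSpace.single (f z) 1⟫_ℂ‖ ^ 2 = ((2 : ℝ) ^ r)⁻¹ := by
    intro z
    rw [EuclideanSpace.inner_single_right, hψ₀, PiLp.smul_apply,
      EuclideanSpace.sum_smul_single_apply_of_injective hf_inj]
    simp [inv_pow, Real.sq_sqrt]
  have h_off : ∀ u ∉ Set.range f, ‖⟪ψ₀, EuclideanSpace.single u 1⟫_ℂ‖ ^ 2 = 0 := by
    intro u hu
    rw [EuclideanSpace.inner_single_right, hψ₀, PiLp.smul_apply,
      EuclideanSpace.sum_smul_single_apply_of_notMem_range _ hu]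
    simp
  have hAf : ∀ z, A *ᵥ f z = (A * R) *ᵥ z + A *ᵥ t := fun z => by
    rw [hf, mulVec_add, mulVec_mulVec]
  simp only [hAf]
  calc _ = ∑ z, if (A * R) *ᵥ z + A *ᵥ t = b then ((2 : ℝ) ^ r)⁻¹ else 0 := by
        rw [Finset.sum_filter]
        exact (Fintype.sum_of_injective f hf_inj _ _ (fun u hu => by simp [h_off u hu])
          fun z => by simp [h_on z, hAf]).symm
    _ = #{z | (A * R) *ᵥ z + A *ᵥ t = b} * ((2 : ℝ) ^ r)⁻¹ := by
        rw [← Finset.sum_filter, sum_const, nsmul_eq_mul]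
    _ = _ := by
        split_ifs with hb
        · rw [card_filter_mulVec_add_eq_of_mem_range _ hb, ZMod.card, Fintype.card_fin,
            Nat.cast_pow, Nat.cast_ofNat, pow_sub₀ _ two_ne_zero (rank_le_width _)]
          field_simp
        · rw [Finset.card_eq_zero.mpr (Finset.filter_eq_empty_iff.mpr fun z _ h => hb ⟨z, h⟩)]
          simp

/-- Proposition 1: for the stabilizer state
`ψ₀ = 2^{-r/2} Σ_z i^{2 cᵀ f(z) + f(z)ᵀ Q f(z)} e_{f(z)}` with `f(z) = Rz + t`, `R` of
rank `r`, and any `A ∈ (ℤ/2ℤ)^{N×n}`, for every `b ∈ (ℤ/2ℤ)^N` the sum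
`Σ_{x : A u_x = b} |⟨ψ₀, e_{u_x}⟩|²` (over bit strings `u ∈ (ℤ/2ℤ)^n` with `A u = b`)
equals `2^{-rank(AR)}` if `b ∈ {A f(z) : z}`, and `0` otherwise. -/
theorem stmt5 (N n r : ℕ) (hrn : r ≤ n) (hnN : n ≤ N)
    (R : Matrix (Fin n) (Fin r) (ZMod 2)) (hR : R.rank = r)
    (t c : Fin n → ZMod 2) (Q : Matrix (Fin n) (Fin n) (ZMod 2)) (hQ : Q.IsSymm)
    (f : (Fin r → ZMod 2) → (Fin n → ZMod 2)) (hf : ∀ z, f z = R.mulVec z + t)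
    (ψ₀ : EuclideanSpace ℂ (Fin n → ZMod 2))
    (hψ₀ : ψ₀ = ((Real.sqrt (2 ^ r) : ℂ))⁻¹ •
      ∑ z : Fin r → ZMod 2,
        (Complex.I ^ (2 * ∑ m, (c m).val * (f z m).val +
            ∑ m, ∑ m', (f z m).val * ((Q m m').val * (f z m').val))) •
          EuclideanSpace.single (f z) (1 : ℂ))
    (A : Matrix (Fin N) (Fin n) (ZMod 2)) :
    ∀ b : Fin N → ZMod 2,
      ∑ u ∈ Finset.univ.filter (fun u : Fin n → ZMod 2 => A.mulVec u = b),
        ‖⟪ψ₀, EuclideanSpace.single u 1⟫_ℂ‖ ^ 2 =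
      if b ∈ Set.range (fun z : Fin r → ZMod 2 => A.mulVec (f z)) then
        ((2 : ℝ) ^ (A * R).rank)⁻¹
      else 0 :=
  stmt5_general N n r R hR t c Q f hf ψ₀ hψ₀ A
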